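/- arXiv:2202.06115 — 9 statements merged into one kernel-verified Lean document; each statement's English description precedes it below -/
import Mathlib

section
/- Let f(x) = c₁ + c₂x^{a₂} + c₃x^{a₃} be a polynomial with complex coefficients satisfying c₁c₂c₃ ≠ 0 and 0 < a₂ < a₃. Then every complex root ζ of f satisfies |ζ| > (1/2)·min{ |c₁/c₂|^{1/a₂}, |c₁/c₃|^{1/a₃} }. -/
/-!
If `‖ζ‖ ≤ ½ (‖c₁‖/‖cᵢ‖)^{1/aᵢ}` for both `i = 2, 3`, then `‖cᵢ ζ^{aᵢ}‖ ≤ 2^{-aᵢ} ‖c₁‖`, and since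
`a₂ ≥ 1`, `a₃ ≥ 2` the two monomials together have norm at most `¾ ‖c₁‖ < ‖c₁‖`, so they cannot
cancel the constant term.
-/

lemma mul_pow_le_half_pow_mul_of_le_half_rpow {A B x : ℝ} {a : ℕ} (ha : 0 < a)
    (hA : 0 ≤ A) (hB : 0 ≤ B) (hx : 0 ≤ x) (hxA : x ≤ 1 / 2 * (A / B) ^ ((1 : ℝ) / a)) :
    B * x ^ a ≤ (1 / 2) ^ a * A := by
  have hpow : x ^ a ≤ (1 / 2) ^ a * (A / B) := by
    calc x ^ a ≤ (1 / 2 * (A / B) ^ ((1 : ℝ) / a)) ^ a := pow_le_pow_left₀ hx hxA a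
      _ = (1 / 2) ^ a * (A / B) := by
        rw [mul_pow, one_div (a : ℝ), Real.rpow_inv_natCast_pow (div_nonneg hA hB) ha.ne']
  calc B * x ^ a ≤ B * ((1 / 2) ^ a * (A / B)) := mul_le_mul_of_nonneg_left hpow hB
    _ = (1 / 2) ^ a * (A * (B / B)) := by ring
    _ ≤ (1 / 2) ^ a * A :=
      mul_le_mul_of_nonneg_left (mul_le_of_le_one_right hA (div_self_le_one B)) (by positivity)

theorem trinomial_root_lower_bound (c₁ c₂ c₃ : ℂ) (hc : c₁ * c₂ * c₃ ≠ 0)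
    (a₂ a₃ : ℕ) (h₂ : 0 < a₂) (h₂₃ : a₂ < a₃) (ζ : ℂ)
    (hroot : c₁ + c₂ * ζ ^ a₂ + c₃ * ζ ^ a₃ = 0) :
    ‖ζ‖ > (1 / 2) * min (‖c₁ / c₂‖ ^ ((1 : ℝ) / (a₂ : ℝ)))
      (‖c₁ / c₃‖ ^ ((1 : ℝ) / (a₃ : ℝ))) := by
  have hc₁ : 0 < ‖c₁‖ := norm_pos_iff.mpr (left_ne_zero_of_mul (left_ne_zero_of_mul hc))
  by_contra! hζ
  have hmonomial : ∀ {c : ℂ} {a : ℕ}, 0 < a → ‖ζ‖ ≤ 1 / 2 * ‖c₁ / c‖ ^ ((1 : ℝ) / a) →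
      ‖c‖ * ‖ζ‖ ^ a ≤ (1 / 2) ^ a * ‖c₁‖ := fun ha hζc =>
    mul_pow_le_half_pow_mul_of_le_half_rpow ha (norm_nonneg _) (norm_nonneg _) (norm_nonneg _)
      (by rwa [← norm_div])
  have hmonomial₂ := hmonomial h₂ (hζ.trans (by gcongr; exact min_le_left _ _))
  have hmonomial₃ := hmonomial (h₂.trans h₂₃) (hζ.trans (by gcongr; exact min_le_right _ _))
  have hhalf₂ : ((1 : ℝ) / 2) ^ a₂ ≤ 1 / 2 := pow_le_of_le_one (by norm_num) (by norm_num) h₂.ne'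
  have hhalf₃ : ((1 : ℝ) / 2) ^ a₃ ≤ (1 / 2) ^ 2 :=
    pow_le_pow_of_le_one (by norm_num) (by norm_num) (by omega)
  have htriangle : ‖c₁‖ ≤ ‖c₂‖ * ‖ζ‖ ^ a₂ + ‖c₃‖ * ‖ζ‖ ^ a₃ := by
    rw [show c₁ = -(c₂ * ζ ^ a₂ + c₃ * ζ ^ a₃) by linear_combination hroot, norm_neg]
    simpa only [norm_mul, norm_pow] using norm_add_le (c₂ * ζ ^ a₂) (c₃ * ζ ^ a₃)
  nlinarith
end

section
/- Let m < n be positive integers. The polynomial g(x) = 1 - c x^m + x^n with c ∈ ℝ has a degenerate positive real root (a positive root that is also a root of g') if and only if c = n / (m^{m/n} (n-m)^{(n-m)/n}). -/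
/-!
Put `u = c ζ^m` and `v = ζ^n`. For `ζ > 0`, the conditions `g(ζ) = 0` and `ζ g'(ζ) = n v - m u = 0`
form a linear system in `u, v` whose only solution is `v = m / (n - m)`, `u = n / (n - m)`. So `ζ`
must be the positive `n`-th root of `m / (n - m)`, and a degenerate positive root exists iff
`c (m / (n - m))^{m/n} = n / (n - m)`, which rearranges to the stated value of `c`.
-/

open Real

lemma mul_deriv_one_sub_mul_pow_add_pow (c x : ℝ) (m n : ℕ) :
    x * deriv (fun x : ℝ => 1 - c * x ^ m + x ^ n) x = n * x ^ n - c * m * x ^ m := by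
  have hg : HasDerivAt (fun x : ℝ => 1 - c * x ^ m + x ^ n)
      (0 - c * (m * x ^ (m - 1)) + n * x ^ (n - 1)) x :=
    ((hasDerivAt_const x 1).sub ((hasDerivAt_pow m x).const_mul c)).add (hasDerivAt_pow n x)
  have mul_pow_pred : ∀ k : ℕ, x * (k * x ^ (k - 1)) = k * x ^ k := by
    rintro (_ | k)
    · simp
    · push_cast [Nat.add_sub_cancel, pow_succ]
      ring
  rw [hg.deriv]
  linear_combination mul_pow_pred n - c * mul_pow_pred m

lemma degenerate_root_iff_pow_eq {c ζ : ℝ} {m n : ℕ} (hmn : m < n) (hζ : ζ ≠ 0) :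
    (1 - c * ζ ^ m + ζ ^ n = 0 ∧ deriv (fun x : ℝ => 1 - c * x ^ m + x ^ n) ζ = 0) ↔
      ζ ^ n = m / (n - m) ∧ c * ζ ^ m = n / (n - m) := by
  have hnm : (n - m : ℝ) ≠ 0 := sub_ne_zero.mpr (by exact_mod_cast hmn.ne')
  have hderiv : deriv (fun x : ℝ => 1 - c * x ^ m + x ^ n) ζ = 0 ↔
      n * ζ ^ n - c * m * ζ ^ m = 0 := by
    rw [← mul_deriv_one_sub_mul_pow_add_pow, mul_eq_zero, or_iff_right hζ]
  rw [hderiv, eq_div_iff hnm, eq_div_iff hnm]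
  constructor
  · rintro ⟨hg, hg'⟩
    exact ⟨by linear_combination (-m : ℝ) * hg + hg', by linear_combination (-n : ℝ) * hg + hg'⟩
  · rintro ⟨hv, hu⟩
    refine ⟨mul_right_cancel₀ hnm ?_, mul_right_cancel₀ hnm ?_⟩
    · linear_combination hv - hu
    · linear_combination (n : ℝ) * hv - m * hu

lemma exists_pos_pow_eq_and_iff {a : ℝ} (ha : 0 < a) {n : ℕ} (hn : n ≠ 0) (P : ℝ → Prop) :
    (∃ x, 0 < x ∧ x ^ n = a ∧ P x) ↔ P (a ^ (n⁻¹ : ℝ)) := by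
  constructor
  · rintro ⟨x, hx, rfl, hP⟩
    rwa [pow_rpow_inv_natCast hx.le hn]
  · exact fun hP => ⟨_, rpow_pos_of_pos ha _, rpow_inv_natCast_pow ha.le hn, hP⟩

lemma mul_div_rpow_eq_div_iff {a b c d : ℝ} (ha : 0 < a) (hb : 0 < b) (p : ℝ) :
    c * (a / b) ^ p = d / b ↔ c = d / (a ^ p * b ^ (1 - p)) := by
  have hap : 0 < a ^ p := rpow_pos_of_pos ha p
  have hbp : 0 < b ^ p := rpow_pos_of_pos hb p
  rw [div_rpow ha.le hb.le, rpow_sub hb, rpow_one]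
  field_simp

theorem degenerate_root_iff_c_eq_r (m n : ℕ) (hm : 0 < m) (hmn : m < n) (c : ℝ) :
    (∃ ζ : ℝ, 0 < ζ ∧ (1 - c * ζ ^ m + ζ ^ n = 0) ∧
      deriv (fun x : ℝ => 1 - c * x ^ m + x ^ n) ζ = 0) ↔
    c = (n : ℝ) / ((m : ℝ) ^ ((m : ℝ) / (n : ℝ)) *
      ((n : ℝ) - (m : ℝ)) ^ (((n : ℝ) - (m : ℝ)) / (n : ℝ))) := by
  have hM : (0 : ℝ) < m := by exact_mod_cast hm
  have hNM : (0 : ℝ) < n - m := sub_pos.mpr (by exact_mod_cast hmn)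
  have hN : (n : ℝ) ≠ 0 := Nat.cast_ne_zero.mpr (by omega)
  calc _ ↔ ∃ ζ : ℝ, 0 < ζ ∧ ζ ^ n = m / (n - m) ∧ c * ζ ^ m = n / (n - m) :=
        exists_congr fun ζ => and_congr_right fun hζ => degenerate_root_iff_pow_eq hmn hζ.ne'
    _ ↔ c * ((m : ℝ) / (n - m)) ^ ((m : ℝ) / n) = n / (n - m) := by
        rw [exists_pos_pow_eq_and_iff (div_pos hM hNM) (by omega) (fun ζ => c * ζ ^ m = _),
          ← rpow_natCast, ← rpow_mul (div_pos hM hNM).le, inv_mul_eq_div]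
    _ ↔ _ := by rw [mul_div_rpow_eq_div_iff hM hNM, one_sub_div hN]
end

section
/- Let m < n be positive integers with n ≥ 2, and c > r_{m,n} := n/(m^{m/n}(n-m)^{(n-m)/n}). Then g(x) = 1 - c x^m + x^n has exactly two distinct positive real roots. -/
set_option maxHeartbeats 1000000 in
theorem two_positive_roots_of_c_gt_r (m n : ℕ) (hm : 0 < m) (hmn : m < n) (hn : 2 ≤ n)
    (c : ℝ)
    (hc : (n : ℝ) / ((m : ℝ) ^ ((m : ℝ) / (n : ℝ)) *
      ((n : ℝ) - (m : ℝ)) ^ (((n : ℝ) - (m : ℝ)) / (n : ℝ))) < c) :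
    ∃ x y : ℝ, x ≠ y ∧ 0 < x ∧ 0 < y ∧
      (1 - c * x ^ m + x ^ n = 0) ∧ (1 - c * y ^ m + y ^ n = 0) ∧
      ∀ z : ℝ, 0 < z → 1 - c * z ^ m + z ^ n = 0 → z = x ∨ z = y := by
  set g : ℝ → ℝ := fun x => 1 - c * x ^ m + x ^ n with hg
  have hmR : (0:ℝ) < m := by exact_mod_cast hm
  have hnR : (0:ℝ) < n := by exact_mod_cast hm.trans hmn
  set K : ℝ := (n:ℝ) - (m:ℝ) with hK
  have hKpos : 0 < K := by
    have : (m:ℝ) < n := by exact_mod_cast hmn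
    simp [hK]; linarith
  set r : ℝ := (n : ℝ) / ((m : ℝ) ^ ((m : ℝ) / (n : ℝ)) * K ^ (K / (n : ℝ))) with hr
  have hrpos : 0 < r := by
    apply div_pos hnR
    positivity
  have hc0 : 0 < c := hrpos.trans hc
  set A : ℝ := c * m / n with hA
  have hApos : 0 < A := by positivity
  set x0 : ℝ := A ^ (1/K) with hx0
  have hx0pos : 0 < x0 := Real.rpow_pos_of_pos hApos _
  -- x0 ^ (n - m) = A
  have hx0nm : x0 ^ (n - m) = A := by
    rw [← Real.rpow_natCast x0 (n - m), Nat.cast_sub hmn.le, ← hK, hx0,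
      ← Real.rpow_mul hApos.le, one_div, inv_mul_cancel₀ hKpos.ne', Real.rpow_one]
  -- x0 ^ m in rpow form
  have hx0m : x0 ^ m = c ^ ((m:ℝ)/K) * (m:ℝ) ^ ((m:ℝ)/K) / (n:ℝ) ^ ((m:ℝ)/K) := by
    rw [← Real.rpow_natCast x0 m, hx0, ← Real.rpow_mul hApos.le]
    have h1 : 1/K * (m:ℝ) = (m:ℝ)/K := by ring
    rw [h1, hA, Real.div_rpow (by positivity) hnR.le,
      Real.mul_rpow hc0.le hmR.le]
  have hmKnK : (m:ℝ)/K + 1 = (n:ℝ)/K := by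
    field_simp
    rw [hK]; ring
  -- key inequality: 1 < c * x0^m * K / n
  have key : 1 < c * x0 ^ m * K / n := by
    have h1 : r ^ ((n:ℝ)/K) < c ^ ((n:ℝ)/K) :=
      Real.rpow_lt_rpow hrpos.le hc (div_pos hnR hKpos)
    have h2 : r ^ ((n:ℝ)/K) = (n:ℝ) ^ ((n:ℝ)/K) / ((m:ℝ) ^ ((m:ℝ)/K) * K) := by
      rw [hr, Real.div_rpow hnR.le (by positivity),
        Real.mul_rpow (by positivity) (by positivity),
        ← Real.rpow_mul hmR.le, ← Real.rpow_mul hKpos.le]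
      have e1 : (m:ℝ)/n * ((n:ℝ)/K) = (m:ℝ)/K := by
        field_simp
      have e2 : K/(n:ℝ) * ((n:ℝ)/K) = 1 := by
        field_simp
      rw [e1, e2, Real.rpow_one]
    have h3 : (n:ℝ) ^ ((n:ℝ)/K) < c ^ ((n:ℝ)/K) * ((m:ℝ) ^ ((m:ℝ)/K) * K) := by
      rw [h2] at h1
      have hpos : 0 < (m:ℝ) ^ ((m:ℝ)/K) * K := by positivity
      exact (div_lt_iff₀ hpos).mp h1
    have hform : c * x0 ^ m * K / n = c ^ ((n:ℝ)/K) * ((m:ℝ) ^ ((m:ℝ)/K) * K) / (n:ℝ) ^ ((n:ℝ)/K) := by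
      rw [hx0m, ← hmKnK, Real.rpow_add hc0, Real.rpow_add hnR, Real.rpow_one, Real.rpow_one]
      field_simp
    rw [hform, lt_div_iff₀ (by positivity), one_mul]
    exact h3
  -- value at the critical point is negative
  have hx0n : x0 ^ n = x0 ^ m * A := by
    rw [← hx0nm, ← pow_add]
    congr 1
    omega
  have hcA : c - A = c * K / n := by
    rw [hA, hK]; field_simp
  have hgx0 : g x0 < 0 := by
    have : g x0 = 1 - x0 ^ m * (c - A) := by
      simp only [hg, hx0n]; ring
    rw [this, hcA]
    have heq2 : x0 ^ m * (c * K / ↑n) = c * x0 ^ m * K / ↑n := by ring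
    linarith [key, heq2.symm ▸ key]
  -- continuity
  have hgcont : Continuous g := by
    apply Continuous.add
    · exact continuous_const.sub (continuous_const.mul (continuous_pow m))
    · exact continuous_pow n
  -- derivative
  have hderiv : ∀ x : ℝ, HasDerivAt g (x ^ (m-1) * ((n:ℝ) * x ^ (n-m) - c * m)) x := by
    intro x
    have h : HasDerivAt g (0 - c * ((m:ℕ) * x ^ (m-1)) + (n:ℕ) * x ^ (n-1)) x := by
      exact ((hasDerivAt_const x (1:ℝ)).sub ((hasDerivAt_pow m x).const_mul c)).add
        (hasDerivAt_pow n x)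
    convert h using 1
    have hpow : x ^ (n-1) = x ^ (m-1) * x ^ (n-m) := by
      rw [← pow_add]; congr 1; omega
    rw [hpow]; push_cast; ring
  -- strict monotonicity
  have hanti : StrictAntiOn g (Set.Icc 0 x0) := by
    apply strictAntiOn_of_deriv_neg (convex_Icc 0 x0) hgcont.continuousOn
    intro x hx
    rw [interior_Icc] at hx
    rw [(hderiv x).deriv]
    have hxpos : 0 < x := hx.1
    have hxlt : x ^ (n - m) < A := by
      rw [← hx0nm]
      exact pow_lt_pow_left₀ hx.2 hxpos.le (by omega)
    have h1 : (n:ℝ) * x ^ (n-m) - c * m < 0 := by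
      have : (n:ℝ) * A = c * m := by rw [hA]; field_simp
      nlinarith
    have h2 : 0 < x ^ (m-1) := pow_pos hxpos _
    nlinarith
  have hmono : StrictMonoOn g (Set.Ici x0) := by
    apply strictMonoOn_of_deriv_pos (convex_Ici x0) hgcont.continuousOn
    intro x hx
    rw [interior_Ici] at hx
    rw [(hderiv x).deriv]
    have hxpos : 0 < x := hx0pos.trans hx
    have hxgt : A < x ^ (n - m) := by
      rw [← hx0nm]
      exact pow_lt_pow_left₀ hx hx0pos.le (by omega)
    have h1 : 0 < (n:ℝ) * x ^ (n-m) - c * m := by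
      have : (n:ℝ) * A = c * m := by rw [hA]; field_simp
      nlinarith
    have h2 : 0 < x ^ (m-1) := pow_pos hxpos _
    nlinarith
  -- lower root
  have hg0 : g 0 = 1 := by
    simp [hg, zero_pow hm.ne', zero_pow (by omega : n ≠ 0)]
  obtain ⟨x, hxmem, hgx⟩ : ∃ x ∈ Set.Ioo (0:ℝ) x0, g x = 0 := by
    have := intermediate_value_Ioo' hx0pos.le hgcont.continuousOn
    have h0 : (0:ℝ) ∈ Set.Ioo (g x0) (g 0) := by
      rw [hg0]; exact ⟨hgx0, one_pos⟩
    obtain ⟨x, hx1, hx2⟩ := this h0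
    exact ⟨x, hx1, hx2⟩
  -- upper root
  set b : ℝ := max (x0 + 1) (c + 1) with hb
  have hb1 : 1 ≤ b := le_trans (by linarith) (le_max_right _ _)
  have hbc : c + 1 ≤ b := le_max_right _ _
  have hbx0 : x0 < b := lt_of_lt_of_le (by linarith) (le_max_left _ _)
  have hgb : 0 < g b := by
    have h1 : b ≤ b ^ (n - m) := le_self_pow₀ hb1 (by omega)
    have h2 : b ^ n = b ^ m * b ^ (n - m) := by
      rw [← pow_add]; congr 1; omega
    have h3 : (0:ℝ) < b ^ m := pow_pos (by linarith) _
    have : g b = 1 + b ^ m * (b ^ (n-m) - c) := by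
      simp only [hg, h2]; ring
    rw [this]
    nlinarith
  obtain ⟨y, hymem, hgy⟩ : ∃ y ∈ Set.Ioo x0 b, g y = 0 := by
    have := intermediate_value_Ioo hbx0.le hgcont.continuousOn
    have h0 : (0:ℝ) ∈ Set.Ioo (g x0) (g b) := ⟨hgx0, hgb⟩
    obtain ⟨y, hy1, hy2⟩ := this h0
    exact ⟨y, hy1, hy2⟩
  refine ⟨x, y, ?_, hxmem.1, hx0pos.trans hymem.1, hgx, hgy, ?_⟩
  · exact ne_of_lt (hxmem.2.trans hymem.1)
  · intro z hz hgz
    have hgz' : g z = 0 := hgz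
    rcases lt_trichotomy z x0 with hlt | heq | hgt
    · left
      exact hanti.injOn ⟨hz.le, hlt.le⟩ ⟨hxmem.1.le, hxmem.2.le⟩ (by rw [hgz', hgx])
    · exfalso; rw [heq] at hgz'; rw [hgz'] at hgx0; exact lt_irrefl 0 hgx0
    · right
      exact hmono.injOn (Set.mem_Ici.mpr hgt.le) (Set.mem_Ici.mpr hymem.1.le) (by rw [hgz', hgy])
end

section
/- Let m < n be positive integers and 0 < c < r_{m,n} := n/(m^{m/n}(n-m)^{(n-m)/n}). Then g(x) = 1 - c x^m + x^n has no positive real root. -/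
/-!
Weighted AM-GM with weights `(n - m)/n` and `m/n`, applied to `n/(n - m)` and `n xⁿ/m`, gives
`1 + xⁿ ≥ r_{m,n} xᵐ` for every `x ≥ 0`. At a positive root `1 + ζⁿ = c ζᵐ`, so `c ≥ r_{m,n}`.
-/

open Real

noncomputable def rootBound (m n : ℝ) : ℝ :=
  n / (m ^ (m / n) * (n - m) ^ ((n - m) / n))

lemma rootBound_eq_rpow_mul_rpow {m n : ℝ} (hm : 0 < m) (hmn : m < n) :
    rootBound m n = (n / (n - m)) ^ ((n - m) / n) * (n / m) ^ (m / n) := by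
  have hn : 0 < n := hm.trans hmn
  have hk : 0 < n - m := sub_pos.2 hmn
  have hn_split : n ^ ((n - m) / n) * n ^ (m / n) = n := by
    rw [← rpow_add hn, ← add_div, sub_add_cancel, div_self hn.ne', rpow_one]
  rw [rootBound, div_rpow hn.le hk.le, div_rpow hn.le hm.le, div_mul_div_comm, hn_split,
    mul_comm (_ ^ _)]

theorem rootBound_mul_rpow_le_one_add_rpow {m n : ℝ} (hm : 0 < m) (hmn : m < n) {x : ℝ}
    (hx : 0 ≤ x) : rootBound m n * x ^ m ≤ 1 + x ^ n := by
  have hn : 0 < n := hm.trans hmn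
  have hk : 0 < n - m := sub_pos.2 hmn
  have amgm := geom_mean_le_arith_mean2_weighted (div_pos hk hn).le (div_pos hm hn).le
    (div_pos hn hk).le (by positivity : 0 ≤ n / m * x ^ n)
    (by rw [← add_div, sub_add_cancel, div_self hn.ne'])
  have hgeom : (n / m * x ^ n) ^ (m / n) = (n / m) ^ (m / n) * x ^ m := by
    rw [mul_rpow (div_pos hn hm).le (rpow_nonneg hx _), ← rpow_mul hx,
      mul_div_cancel₀ _ hn.ne']
  have harith : (n - m) / n * (n / (n - m)) + m / n * (n / m * x ^ n) = 1 + x ^ n := by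
    field_simp
  rw [hgeom, harith, ← mul_assoc, ← rootBound_eq_rpow_mul_rpow hm hmn] at amgm
  exact amgm

theorem no_positive_root_of_c_lt_r_general (m n : ℕ) (hm : 0 < m) (hmn : m < n) (c : ℝ)
    (hc : c < (n : ℝ) / ((m : ℝ) ^ ((m : ℝ) / (n : ℝ)) *
      ((n : ℝ) - (m : ℝ)) ^ (((n : ℝ) - (m : ℝ)) / (n : ℝ)))) :
    ¬ ∃ ζ : ℝ, 0 < ζ ∧ 1 - c * ζ ^ m + ζ ^ n = 0 := by
  rintro ⟨ζ, hζ, hroot⟩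
  have hbound := rootBound_mul_rpow_le_one_add_rpow (Nat.cast_pos.2 hm) (Nat.cast_lt.2 hmn) hζ.le
  rw [rpow_natCast, rpow_natCast] at hbound
  have : c * ζ ^ m < rootBound m n * ζ ^ m := mul_lt_mul_of_pos_right hc (pow_pos hζ m)
  linarith

theorem no_positive_root_of_c_lt_r (m n : ℕ) (hm : 0 < m) (hmn : m < n) (c : ℝ)
    (hc0 : 0 < c)
    (hc : c < (n : ℝ) / ((m : ℝ) ^ ((m : ℝ) / (n : ℝ)) *
      ((n : ℝ) - (m : ℝ)) ^ (((n : ℝ) - (m : ℝ)) / (n : ℝ)))) :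
    ¬ ∃ ζ : ℝ, 0 < ζ ∧ 1 - c * ζ ^ m + ζ ^ n = 0 :=
  no_positive_root_of_c_lt_r_general m n hm hmn c hc
end

section
/- Let m < n be positive integers and k ≥ 2. Then ∏_{j=1}^{k-1} (1 + kn − jm)/j ≤ k · (m · r_{m,n}^{n/m})^k, where r_{m,n} = n/(m^{m/n}(n-m)^{(n-m)/n}). -/
/-!
Put `x = k n / m`. Since `m ≥ 1`, each factor is at most `m (x + 1 - j) / j`, so the product is
at most `m^(k-1)` times the generalized binomial coefficient `C(x, k-1) ≤ k C(x, k)` (as `x ≥ k`).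
The entropy bound `C(x, k) ≤ x^x / (k^k (x-k)^(x-k))` holds for real `x ≥ k`; by induction on
`k` it reduces to the monotonicity of `(1 + 1/t)^t`, i.e. to the concavity of `log`. With
`x = k n / m` the entropy bound times `m^k` is exactly `(m r_{m,n}^{n/m})^k`.
-/

open Real Finset
open scoped Nat

lemma antitoneOn_log_one_add_div_self :
    AntitoneOn (fun u : ℝ => log (1 + u) / u) (Set.Ioi 0) := by
  intro s (hs : 0 < s) t (ht : 0 < t) hst
  have := strictConcaveOn_log_Ioi.concaveOn.antitoneOn_slope_gt (Set.mem_Ioi.2 one_pos)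
    (⟨by simp; linarith, by simp; linarith⟩ : 1 + s ∈ {y ∈ Set.Ioi 0 | 1 < y})
    ⟨by simp; linarith, by simp; linarith⟩ (by linarith : 1 + s ≤ 1 + t)
  simpa [slope_def_field] using this

lemma add_one_rpow_mul_rpow_le {a b : ℝ} (ha : 0 ≤ a) (hab : a ≤ b) :
    (a + 1) ^ a * b ^ b ≤ a ^ a * (b + 1) ^ b := by
  rcases ha.eq_or_lt with rfl | ha
  · simpa using rpow_le_rpow hab (by linarith) hab
  have hb : 0 < b := ha.trans_le hab
  have key : a * log (1 + a⁻¹) ≤ b * log (1 + b⁻¹) := by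
    simpa [div_inv_eq_mul, mul_comm] using
      antitoneOn_log_one_add_div_self (inv_pos.2 hb) (inv_pos.2 ha) (inv_anti₀ ha hab)
  have hlog : ∀ c : ℝ, 0 < c → log (1 + c⁻¹) = log (c + 1) - log c := fun c hc => by
    rw [← log_div (by positivity) hc.ne', add_div, div_self hc.ne', one_div]
  rw [← log_le_log_iff (by positivity) (by positivity), log_mul (by positivity) (by positivity),
    log_mul (by positivity) (by positivity), log_rpow (by positivity), log_rpow hb, log_rpow ha,
    log_rpow (by positivity)]
  rw [hlog a ha, hlog b hb] at key
  linarith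

lemma prod_range_sub_mul_rpow_le (k : ℕ) {x : ℝ} (hkx : k ≤ x) :
    (∏ i ∈ range k, (x - i)) * (x - k) ^ (x - k) * (k : ℝ) ^ k ≤ k ! * x ^ x := by
  induction k generalizing x with
  | zero => simp
  | succ k ih =>
    push_cast at hkx ⊢
    have hx : 0 < x := by linarith [(k.cast_nonneg : (0 : ℝ) ≤ k)]
    have hkx' : (k : ℝ) ≤ x - 1 := by linarith
    have hprod : ∏ i ∈ range (k + 1), (x - i) = x * ∏ i ∈ range k, (x - 1 - i) := by
      rw [prod_range_succ', mul_comm]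
      exact congr_arg₂ _ (by simp) (prod_congr rfl fun i _ => by push_cast; ring)
    have hstep : ((k : ℝ) + 1) ^ k * (x - 1) ^ (x - 1) ≤ (k : ℝ) ^ k * x ^ (x - 1) := by
      simpa [rpow_natCast] using add_one_rpow_mul_rpow_le k.cast_nonneg hkx'
    have hkk : (0 : ℝ) < (k : ℝ) ^ k := by
      rcases k.eq_zero_or_pos with rfl | hk
      · simp
      · positivity
    have hxx : x ^ x = x * x ^ (x - 1) := by rw [← rpow_one_add' hx.le (by linarith)]; ring_nf
    rw [← mul_le_mul_iff_of_pos_right hkk, Nat.factorial_succ, hprod, hxx, sub_add_eq_sub_sub_swap]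
    push_cast
    calc x * (∏ i ∈ range k, (x - 1 - i)) * (x - 1 - k) ^ (x - 1 - k) * ((k : ℝ) + 1) ^ (k + 1)
          * (k : ℝ) ^ k
        = x * (k + 1) * ((k : ℝ) + 1) ^ k
          * ((∏ i ∈ range k, (x - 1 - i)) * (x - 1 - k) ^ (x - 1 - k) * (k : ℝ) ^ k) := by ring
      _ ≤ x * (k + 1) * ((k : ℝ) + 1) ^ k * (k ! * (x - 1) ^ (x - 1)) :=
          mul_le_mul_of_nonneg_left (ih hkx') (by positivity)
      _ = x * (k + 1) * k ! * (((k : ℝ) + 1) ^ k * (x - 1) ^ (x - 1)) := by ring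
      _ ≤ x * (k + 1) * k ! * ((k : ℝ) ^ k * x ^ (x - 1)) :=
          mul_le_mul_of_nonneg_left hstep (by positivity)
      _ = (k + 1) * k ! * (x * x ^ (x - 1)) * (k : ℝ) ^ k := by ring

lemma rpow_self_pos {a : ℝ} (ha : 0 ≤ a) : 0 < a ^ a := by
  rcases ha.eq_or_lt with rfl | ha
  · simp
  · exact rpow_pos_of_pos ha a

lemma prod_Icc_add_one_sub_div_eq (l : ℕ) (x : ℝ) :
    ∏ j ∈ Icc 1 l, (x + 1 - j) / j = (∏ i ∈ range l, (x - i)) / l ! := by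
  induction l with
  | zero => simp
  | succ l ih =>
    rw [prod_Icc_succ_top (by omega), ih, prod_range_succ, Nat.factorial_succ]
    push_cast
    field_simp
    ring

lemma prod_Icc_add_one_sub_div_le {k : ℕ} (hk : 1 ≤ k) {x : ℝ} (hkx : k ≤ x) :
    ∏ j ∈ Icc 1 (k - 1), (x + 1 - j) / j ≤ k * (x ^ x / ((x - k) ^ (x - k) * (k : ℝ) ^ k)) := by
  obtain ⟨l, rfl⟩ := Nat.exists_eq_add_of_le' hk
  have hbound := prod_range_sub_mul_rpow_le (l + 1) hkx
  push_cast at hkx hbound ⊢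
  have hden : 0 < (x - (l + 1)) ^ (x - (l + 1)) * ((l : ℝ) + 1) ^ (l + 1) :=
    mul_pos (rpow_self_pos (by linarith)) (by positivity)
  have hdrop : ∏ i ∈ range l, (x - i) ≤ ∏ i ∈ range (l + 1), (x - i) := by
    have hnonneg : 0 ≤ ∏ i ∈ range l, (x - i) := prod_nonneg fun i hi => by
      have : (i : ℝ) + 1 ≤ l := by exact_mod_cast mem_range.1 hi
      linarith
    rw [prod_range_succ]
    exact le_mul_of_one_le_right hnonneg (by linarith)
  rw [mul_assoc, ← le_div_iff₀ hden] at hbound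
  rw [prod_Icc_add_one_sub_div_eq]
  calc (∏ i ∈ range l, (x - i)) / l ! ≤ (∏ i ∈ range (l + 1), (x - i)) / l ! := by gcongr
    _ ≤ (l + 1)! * x ^ x / ((x - (l + 1)) ^ (x - (l + 1)) * ((l : ℝ) + 1) ^ (l + 1)) / l ! := by
        gcongr
    _ = (l + 1) * (x ^ x / ((x - (l + 1)) ^ (x - (l + 1)) * ((l : ℝ) + 1) ^ (l + 1))) := by
        rw [Nat.factorial_succ]; push_cast; field_simp

lemma mul_rpow_div_eq {m n : ℝ} (hm : 0 < m) (hmn : m < n) :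
    m * (n / (m ^ (m / n) * (n - m) ^ ((n - m) / n))) ^ (n / m) =
      n ^ (n / m) / (n - m) ^ ((n - m) / m) := by
  have hn : 0 < n := hm.trans hmn
  have hnm : 0 < n - m := by linarith
  rw [div_rpow hn.le (by positivity), mul_rpow (by positivity) (by positivity), ← rpow_mul hm.le,
    ← rpow_mul hnm.le, div_mul_div_cancel₀ hn.ne', div_self hm.ne', rpow_one,
    show (n - m) / n * (n / m) = (n - m) / m by field_simp]
  field_simp

lemma pow_mul_rpow_self_div_eq {m n : ℝ} (hm : 0 < m) (hmn : m < n) {k : ℕ} (hk : 0 < k) :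
    m ^ k * ((k * n / m) ^ (k * n / m) / ((k * n / m - k) ^ (k * n / m - k) * (k : ℝ) ^ k)) =
      (n ^ (n / m) / (n - m) ^ ((n - m) / m)) ^ k := by
  have hn : 0 < n := hm.trans hmn
  have hnm : 0 < n - m := by linarith
  have hk' : (0 : ℝ) < k := by exact_mod_cast hk
  have hx : k * n / m - k = k * (n - m) / m := by field_simp
  rw [hx]
  apply log_injOn_pos (by simp; positivity) (by simp; positivity)
  rw [log_mul, log_div, log_mul, log_rpow, log_rpow, log_pow, log_pow, log_pow]
  all_goals try positivity
  rw [log_div (rpow_pos_of_pos hn _).ne' (rpow_pos_of_pos hnm _).ne', log_rpow hn, log_rpow hnm,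
    log_div (by positivity) hm.ne', log_mul hk'.ne' hn.ne', log_div (by positivity) hm.ne',
    log_mul hk'.ne' hnm.ne']
  field_simp
  ring

lemma one_add_sub_mul_div_le {m : ℝ} (hm : 1 ≤ m) (a : ℝ) {j : ℝ} (hj : 0 ≤ j) :
    (1 + a - j * m) / j ≤ m * ((a / m + 1 - j) / j) := by
  rw [mul_div_assoc', mul_sub, mul_add, mul_div_cancel₀ a (by positivity)]
  exact div_le_div_of_nonneg_right (by linarith) hj

theorem product_bound_low (m n : ℕ) (hm : 0 < m) (hmn : m < n) (k : ℕ) (hk : 2 ≤ k) :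
    ∏ j ∈ Finset.Icc 1 (k - 1), ((1 + (k : ℝ) * n - (j : ℝ) * m) / (j : ℝ)) ≤
      (k : ℝ) * ((m : ℝ) * ((n : ℝ) / ((m : ℝ) ^ ((m : ℝ) / (n : ℝ)) *
        ((n : ℝ) - (m : ℝ)) ^ (((n : ℝ) - (m : ℝ)) / (n : ℝ)))) ^ ((n : ℝ) / (m : ℝ))) ^ k := by
  have hm1 : (1 : ℝ) ≤ m := by exact_mod_cast hm
  have hmn' : (m : ℝ) < n := by exact_mod_cast hmn
  set x : ℝ := k * n / m
  have hkx : (k : ℝ) ≤ x := by rw [le_div_iff₀ (by linarith)]; gcongr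
  have hjk (j : ℕ) (hj : j ∈ Icc 1 (k - 1)) : (j : ℝ) ≤ k := by
    exact_mod_cast (mem_Icc.1 hj).2.trans (Nat.sub_le k 1)
  calc ∏ j ∈ Icc 1 (k - 1), (1 + (k : ℝ) * n - j * m) / j
      ≤ ∏ j ∈ Icc 1 (k - 1), m * ((x + 1 - j) / j) := by
        refine prod_le_prod (fun j hj => div_nonneg ?_ j.cast_nonneg)
          (fun j _ => one_add_sub_mul_div_le hm1 _ j.cast_nonneg)
        nlinarith [hjk j hj]
    _ = (m : ℝ) ^ (k - 1) * ∏ j ∈ Icc 1 (k - 1), (x + 1 - j) / j := by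
        rw [prod_mul_distrib, prod_const, Nat.card_Icc, Nat.add_sub_cancel]
    _ ≤ (m : ℝ) ^ k * (k * (x ^ x / ((x - k) ^ (x - k) * (k : ℝ) ^ k))) := by
        refine mul_le_mul (pow_le_pow_right₀ hm1 (Nat.sub_le k 1))
          (prod_Icc_add_one_sub_div_le (by omega) hkx)
          (prod_nonneg fun j hj => div_nonneg ?_ j.cast_nonneg) (by positivity)
        linarith [hjk j hj]
    _ = _ := by
        rw [mul_left_comm, pow_mul_rpow_self_div_eq (by linarith) hmn' (by omega),
          mul_rpow_div_eq (by linarith) hmn']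
end

section
/- Let m < n be positive integers and k ≥ 2. Then ∏_{j=1}^{k-1} (1 + km − jn)/j ≤ k · (n / r_{m,n})^k in absolute value, i.e., |∏_{j=1}^{k-1} (1 + km − jn)/j| ≤ k · (n/r_{m,n})^k, where r_{m,n} = n/(m^{m/n}(n-m)^{(n-m)/n}). -/
/-!
Write `k m = i n + r` with `0 ≤ r < n`. The numerators `1 + k m - j n` are spaced by `n`, and
`1 + k m` lies in `(i n, (i + 1) n]`, so their absolute values are at most `i n, …, 2n, n` for
`j ≤ i` and `n, 2n, …` for `j > i`: the product is at most `i! (k-1-i)! n^(k-1) / (k-1)!`,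
i.e. `n^(k-1) / C(k-1, i)`. Since `i = ⌊k p⌋` is the mode of the binomial law `B(k-1, p)` with
`p = m / n`, its weight is at least `1 / k`, which bounds this by `k m^i (n-m)^(k-1-i)`. Finally
`(n / r_{m,n})^k = m^(k m/n) (n-m)^(k (n-m)/n)` and the exponents dominate `i` and `k-1-i`.
-/

open Finset Nat Polynomial

theorem apply_le_apply_of_unimodal {α : Type*} [Preorder α] {f : ℕ → α} {i N : ℕ}
    (hup : ∀ n < i, f n ≤ f (n + 1)) (hdown : ∀ n, i ≤ n → n < N → f (n + 1) ≤ f n) :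
    ∀ j ≤ N, f j ≤ f i := by
  intro j hjN
  rcases le_total j i with hji | hij
  · clear hjN
    induction hji using Nat.decreasingInduction with
    | self => exact le_rfl
    | of_succ n hni ih => exact (hup n hni).trans ih
  · induction j, hij using Nat.le_induction with
    | base => exact le_rfl
    | succ n hin ih => exact (hdown n hin (by omega)).trans (ih (by omega))

namespace bernsteinPolynomial

variable {N j : ℕ} {p : ℝ}

theorem eval_eq (N j : ℕ) (p : ℝ) :
    (bernsteinPolynomial ℝ N j).eval p = N.choose j * p ^ j * (1 - p) ^ (N - j) := by
  simp [bernsteinPolynomial]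

theorem eval_nonneg (hp0 : 0 ≤ p) (hp1 : p ≤ 1) (N j : ℕ) :
    0 ≤ (bernsteinPolynomial ℝ N j).eval p := by
  rw [eval_eq]
  have : 0 ≤ 1 - p := by linarith
  positivity

theorem eval_succ_mul (hj : j < N) (p : ℝ) :
    (bernsteinPolynomial ℝ N (j + 1)).eval p * ((j + 1) * (1 - p)) =
      (bernsteinPolynomial ℝ N j).eval p * ((N - j) * p) := by
  have hchoose : (N.choose (j + 1) : ℝ) * (j + 1) = N.choose j * (N - j) := by
    have h := congrArg (Nat.cast : ℕ → ℝ) (Nat.choose_succ_right_eq N j)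
    push_cast [Nat.cast_sub hj.le] at h
    exact h
  rw [eval_eq, eval_eq, show N - j = N - (j + 1) + 1 by omega]
  linear_combination p ^ (j + 1) * (1 - p) ^ (N - (j + 1) + 1) * hchoose

theorem eval_le_eval_succ (hp0 : 0 ≤ p) (hp1 : p < 1) (hj : j < N) (h : j + 1 ≤ (N + 1) * p) :
    (bernsteinPolynomial ℝ N j).eval p ≤ (bernsteinPolynomial ℝ N (j + 1)).eval p := by
  have hpos : 0 < (j + 1) * (1 - p) := by nlinarith
  refine le_of_mul_le_mul_right ?_ hpos
  rw [eval_succ_mul hj]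
  exact mul_le_mul_of_nonneg_left (by nlinarith) (eval_nonneg hp0 hp1.le N j)

theorem eval_succ_le_eval (hp0 : 0 ≤ p) (hp1 : p < 1) (hj : j < N) (h : (N + 1) * p ≤ j + 1) :
    (bernsteinPolynomial ℝ N (j + 1)).eval p ≤ (bernsteinPolynomial ℝ N j).eval p := by
  have hpos : 0 < (j + 1) * (1 - p) := by nlinarith
  refine le_of_mul_le_mul_right ?_ hpos
  rw [eval_succ_mul hj]
  exact mul_le_mul_of_nonneg_left (by nlinarith) (eval_nonneg hp0 hp1.le N j)

theorem one_le_succ_mul_eval_mode {i : ℕ} (hp0 : 0 ≤ p) (hp1 : p < 1)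
    (hi : i ≤ (N + 1) * p) (hi' : (N + 1) * p < i + 1) :
    1 ≤ (N + 1) * (bernsteinPolynomial ℝ N i).eval p := by
  have hiN : i < N + 1 := by
    have : (i : ℝ) < N + 1 := by nlinarith
    exact_mod_cast this
  have hmax : ∀ j ≤ N, (bernsteinPolynomial ℝ N j).eval p ≤ (bernsteinPolynomial ℝ N i).eval p :=
    apply_le_apply_of_unimodal
      (fun j hj => eval_le_eval_succ hp0 hp1 (by omega) <|
        le_trans (by exact_mod_cast hj) hi)
      (fun j hij _ => eval_succ_le_eval hp0 hp1 (by omega) <|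
        hi'.le.trans (by exact_mod_cast Nat.succ_le_succ hij))
  calc (1 : ℝ) = ∑ j ∈ range (N + 1), (bernsteinPolynomial ℝ N j).eval p := by
        rw [← eval_finsetSum, bernsteinPolynomial.sum, eval_one]
    _ ≤ ∑ _j ∈ range (N + 1), (bernsteinPolynomial ℝ N i).eval p :=
        sum_le_sum fun j hj => hmax j (Nat.lt_succ_iff.mp (mem_range.mp hj))
    _ = (N + 1) * (bernsteinPolynomial ℝ N i).eval p := by simp

end bernsteinPolynomial

theorem factorial_mul_factorial_mul_pow_div_factorial_le {x s : ℝ} (hx : 0 ≤ x) (hxs : x < s)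
    {N i : ℕ} (hi : i ≤ (N + 1) * (x / s)) (hi' : (N + 1) * (x / s) < i + 1) :
    i ! * (N - i)! * s ^ N / N ! ≤ (N + 1) * x ^ i * (s - x) ^ (N - i) := by
  have hs : 0 < s := hx.trans_lt hxs
  have hp1 : x / s < 1 := (div_lt_one hs).mpr hxs
  have hiN : i ≤ N := by
    have : (i : ℝ) < N + 1 := hi.trans_lt (mul_lt_of_lt_one_right (by positivity) hp1)
    exact Nat.lt_succ_iff.mp (by exact_mod_cast this)
  have hmode := bernsteinPolynomial.one_le_succ_mul_eval_mode (by positivity) hp1 hi hi'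
  rw [bernsteinPolynomial.eval_eq, Nat.cast_choose ℝ hiN, one_sub_div hs.ne', div_pow, div_pow]
    at hmode
  have hsN : s ^ N = s ^ i * s ^ (N - i) := by rw [← pow_add, Nat.add_sub_cancel' hiN]
  rw [div_le_iff₀ (by positivity), hsN]
  field_simp at hmode
  linarith

theorem prod_range_le_factorial_mul_pow {f : ℕ → ℝ} {d : ℝ} {n : ℕ} (h0 : ∀ j < n, 0 ≤ f j)
    (h : ∀ j < n, f j ≤ (j + 1) * d) : ∏ j ∈ range n, f j ≤ n ! * d ^ n := by
  calc ∏ j ∈ range n, f j ≤ ∏ j ∈ range n, ((j + 1) * d) :=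
        prod_le_prod (fun j hj => h0 j (mem_range.mp hj)) fun j hj => h j (mem_range.mp hj)
    _ = n ! * d ^ n := by
        rw [prod_mul_distrib, prod_const, card_range, ← prod_range_add_one_eq_factorial]
        push_cast
        rfl

theorem prod_range_abs_sub_mul_le {a d : ℝ} {i N : ℕ} (hiN : i ≤ N) (hlo : i * d ≤ a)
    (hhi : a ≤ (i + 1) * d) :
    ∏ j ∈ range N, |a - (j + 1) * d| ≤ i ! * (N - i)! * d ^ N := by
  have hd : 0 ≤ d := by linarith
  obtain ⟨l, rfl⟩ := Nat.exists_eq_add_of_le hiN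
  rw [prod_range_add, Nat.add_sub_cancel_left, pow_add, mul_mul_mul_comm]
  refine mul_le_mul ?_ ?_ (prod_nonneg fun _ _ => abs_nonneg _) (by positivity)
  · rw [← prod_range_reflect]
    refine prod_range_le_factorial_mul_pow (fun _ _ => abs_nonneg _) fun j hj => ?_
    rw [Nat.cast_sub (by omega), Nat.cast_sub (by omega)]
    push_cast
    rw [abs_le]
    constructor <;> nlinarith
  · refine prod_range_le_factorial_mul_pow (fun _ _ => abs_nonneg _) fun j _ => ?_
    push_cast
    rw [abs_le]
    constructor <;> nlinarith

theorem prod_Icc_eq_prod_range_succ {M : Type*} [CommMonoid M] (f : ℕ → M) (N : ℕ) :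
    ∏ j ∈ Icc 1 N, f j = ∏ j ∈ range N, f (j + 1) := by
  rw [range_eq_Ico, prod_Ico_add', zero_add, Ico_add_one_right_eq_Icc]

theorem abs_prod_Icc_div_eq (f : ℕ → ℝ) (N : ℕ) :
    |∏ j ∈ Icc 1 N, f j / j| = (∏ j ∈ range N, |f (j + 1)|) / N ! := by
  rw [abs_prod, prod_Icc_eq_prod_range_succ]
  simp only [abs_div, prod_div_distrib, Nat.abs_cast]
  congr 1
  rw [← Nat.cast_prod, prod_range_add_one_eq_factorial]

theorem pow_mul_pow_le_rpow_mul_rpow_pow {x y p q : ℝ} (hx : 1 ≤ x) (hy : 1 ≤ y) (hpq : p + q = 1)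
    {i N : ℕ} (hiN : i ≤ N) (hi : i ≤ (N + 1) * p) (hi' : (N + 1) * p ≤ i + 1) :
    x ^ i * y ^ (N - i) ≤ (x ^ p * y ^ q) ^ (N + 1) := by
  obtain rfl : q = 1 - p := eq_sub_of_add_eq' hpq
  rw [mul_pow, ← Real.rpow_mul_natCast (by positivity), ← Real.rpow_mul_natCast (by positivity),
    ← Real.rpow_natCast x, ← Real.rpow_natCast y, Nat.cast_sub hiN]
  push_cast
  gcongr <;> linarith

theorem exists_mul_le_and_one_add_le (a : ℕ) {n : ℕ} (hn : 0 < n) :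
    ∃ i : ℕ, (i : ℝ) * n ≤ a ∧ 1 + (a : ℝ) ≤ (i + 1) * n := by
  refine ⟨a / n, by exact_mod_cast Nat.div_mul_le_self a n, ?_⟩
  have := Nat.lt_div_mul_add (a := a) hn
  exact_mod_cast (by linarith : 1 + a ≤ (a / n + 1) * n)

theorem product_bound_mid (m n : ℕ) (hm : 0 < m) (hmn : m < n) (k : ℕ) (hk : 2 ≤ k) :
    |∏ j ∈ Finset.Icc 1 (k - 1), ((1 + (k : ℝ) * m - (j : ℝ) * n) / (j : ℝ))| ≤
      (k : ℝ) * ((n : ℝ) / ((n : ℝ) / ((m : ℝ) ^ ((m : ℝ) / (n : ℝ)) *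
        ((n : ℝ) - (m : ℝ)) ^ (((n : ℝ) - (m : ℝ)) / (n : ℝ))))) ^ k := by
  obtain ⟨N, rfl⟩ : ∃ N, k = N + 1 := ⟨k - 1, by omega⟩
  have hn : (0 : ℝ) < n := by exact_mod_cast hm.trans hmn
  have hmn_succ : (m : ℝ) + 1 ≤ n := by exact_mod_cast hmn
  obtain ⟨i, hlo, hhi⟩ := exists_mul_le_and_one_add_le ((N + 1) * m) (hm.trans hmn)
  push_cast at hlo hhi
  have hiN : i ≤ N := by
    by_contra! h
    have : (N + 1 : ℝ) ≤ i := by exact_mod_cast h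
    nlinarith
  have hp_lo : (i : ℝ) ≤ (N + 1) * (m / n) := by rwa [← mul_div_assoc, le_div_iff₀ hn]
  have hp_hi : (N + 1) * (m / n : ℝ) < i + 1 := by
    rw [← mul_div_assoc, div_lt_iff₀ hn]
    linarith
  rw [div_div_cancel₀ hn.ne', Nat.add_sub_cancel,
    abs_prod_Icc_div_eq (fun j : ℕ => 1 + ((N + 1 : ℕ) : ℝ) * m - j * n)]
  push_cast
  calc (∏ j ∈ range N, |1 + (N + 1 : ℝ) * m - (j + 1) * n|) / N !
      ≤ i ! * (N - i)! * n ^ N / N ! := by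
        gcongr
        exact prod_range_abs_sub_mul_le hiN (by linarith) hhi
    _ ≤ (N + 1) * m ^ i * (n - m) ^ (N - i) :=
        factorial_mul_factorial_mul_pow_div_factorial_le (by positivity) (by linarith) hp_lo hp_hi
    _ ≤ _ := by
        rw [mul_assoc]
        gcongr
        exact pow_mul_pow_le_rpow_mul_rpow_pow (by exact_mod_cast hm) (by linarith)
          (by field_simp; ring) hiN hp_lo hp_hi.le
end

section
/- Fix integers 0 < a₂ < a₃ = d and H ≥ 1. The number of triples (c₁, c₂, c₃) ∈ {−H,…,H}³ with c₁c₂c₃ ≠ 0 satisfying 0 < |c₂| / (|c₁|^{(a₃−a₂)/a₃} |c₃|^{a₂/a₃} r) − 1 < 1/log(dH), where r = a₃/(a₂^{a₂/a₃}(a₃−a₂)^{(a₃−a₂)/a₃}), is at most 8H³ (1/log(dH) + 1/H). -/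
open Finset

noncomputable def icB (a₂ a₃ c₁ c₃ : ℤ) : ℝ :=
  |(c₁ : ℝ)| ^ (((a₃ : ℝ) - (a₂ : ℝ)) / (a₃ : ℝ)) *
    |(c₃ : ℝ)| ^ ((a₂ : ℝ) / (a₃ : ℝ)) *
    ((a₃ : ℝ) / ((a₂ : ℝ) ^ ((a₂ : ℝ) / (a₃ : ℝ)) *
      ((a₃ : ℝ) - (a₂ : ℝ)) ^ (((a₃ : ℝ) - (a₂ : ℝ)) / (a₃ : ℝ))))

lemma fiber_bound (H : ℤ) (hH : 1 ≤ H) (B ε : ℝ) (hB : 0 < B) (hε : 0 < ε) :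
    (((Finset.Icc (-H) H).filter
        (fun c₂ : ℤ => B < |(c₂ : ℝ)| ∧ |(c₂ : ℝ)| < B * (1 + ε))).card : ℝ)
      ≤ 2 * ((H : ℝ) * ε + 1) := by
  classical
  set M : ℤ := min ⌊B * (1 + ε)⌋ H with hM
  set I : Finset ℤ := Finset.Ioc ⌊B⌋ M with hI
  have hH' : (1 : ℝ) ≤ (H : ℝ) := by exact_mod_cast hH
  have hHε : (0 : ℝ) ≤ (H : ℝ) * ε := mul_nonneg (by linarith) hε.le
  have hsub : (Finset.Icc (-H) H).filter
        (fun c₂ : ℤ => B < |(c₂ : ℝ)| ∧ |(c₂ : ℝ)| < B * (1 + ε))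
      ⊆ I ∪ I.image (fun n => -n) := by
    intro c₂ hc
    simp only [Finset.mem_filter, Finset.mem_Icc] at hc
    obtain ⟨⟨h1, h2⟩, h3, h4⟩ := hc
    have habs : |c₂| ∈ I := by
      rw [hI, Finset.mem_Ioc]
      refine ⟨?_, le_min ?_ (abs_le.2 ⟨h1, h2⟩)⟩
      · rw [Int.floor_lt]; push_cast; exact h3
      · rw [Int.le_floor]; push_cast; exact h4.le
    rcases le_or_gt 0 c₂ with h | h
    · exact Finset.mem_union_left _ (by rwa [abs_of_nonneg h] at habs)
    · refine Finset.mem_union_right _ (Finset.mem_image.2 ⟨|c₂|, habs, ?_⟩)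
      rw [abs_of_neg h]; ring
  have hcard := Finset.card_le_card hsub
  have hcard2 : (I ∪ I.image (fun n => -n)).card ≤ 2 * I.card := by
    have h1 : (I.image (fun n => -n)).card ≤ I.card := Finset.card_image_le
    have h2 := Finset.card_union_le I (I.image (fun n => -n))
    omega
  have hIcard : (I.card : ℝ) ≤ (H : ℝ) * ε + 1 := by
    rw [hI, Int.card_Ioc]
    rcases le_or_gt (M - ⌊B⌋) 0 with h | h
    · rw [Int.toNat_of_nonpos h]; push_cast; linarith
    · have h' : ((M - ⌊B⌋).toNat : ℤ) = M - ⌊B⌋ := Int.toNat_of_nonneg h.le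
      have hcast : ((M - ⌊B⌋).toNat : ℝ) = ((M : ℝ) - (⌊B⌋ : ℝ)) := by exact_mod_cast h'
      rw [hcast]
      have hfB : B - 1 < (⌊B⌋ : ℝ) := Int.sub_one_lt_floor B
      rcases le_or_gt B (H : ℝ) with hBH | hBH
      · have hM1 : (M : ℝ) ≤ (⌊B * (1 + ε)⌋ : ℝ) := by exact_mod_cast min_le_left _ _
        have hM2 : (M : ℝ) ≤ B * (1 + ε) := hM1.trans (Int.floor_le _)
        nlinarith [mul_nonneg (sub_nonneg.2 hBH) hε.le]
      · have hM2 : (M : ℝ) ≤ (H : ℝ) := by exact_mod_cast min_le_right _ _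
        linarith
  calc (((Finset.Icc (-H) H).filter
        (fun c₂ : ℤ => B < |(c₂ : ℝ)| ∧ |(c₂ : ℝ)| < B * (1 + ε))).card : ℝ)
      ≤ ((2 * I.card : ℕ) : ℝ) := by exact_mod_cast hcard.trans hcard2
    _ = 2 * (I.card : ℝ) := by push_cast; ring
    _ ≤ 2 * ((H : ℝ) * ε + 1) := by linarith

theorem ill_conditioned_count (a₂ a₃ : ℤ) (h₂ : 0 < a₂) (h₂₃ : a₂ < a₃)
    (H : ℤ) (hH : 1 ≤ H) (hdH : 3 ≤ a₃ * H) :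
    ({t : ℤ × ℤ × ℤ |
        t.1 ∈ Finset.Icc (-H) H ∧ t.2.1 ∈ Finset.Icc (-H) H ∧ t.2.2 ∈ Finset.Icc (-H) H ∧
        t.1 * t.2.1 * t.2.2 ≠ 0 ∧
        0 < |(t.2.1 : ℝ)| /
            (|(t.1 : ℝ)| ^ (((a₃ : ℝ) - (a₂ : ℝ)) / (a₃ : ℝ)) *
             |(t.2.2 : ℝ)| ^ ((a₂ : ℝ) / (a₃ : ℝ)) *
             ((a₃ : ℝ) / ((a₂ : ℝ) ^ ((a₂ : ℝ) / (a₃ : ℝ)) *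
               ((a₃ : ℝ) - (a₂ : ℝ)) ^ (((a₃ : ℝ) - (a₂ : ℝ)) / (a₃ : ℝ))))) - 1 ∧
        |(t.2.1 : ℝ)| /
            (|(t.1 : ℝ)| ^ (((a₃ : ℝ) - (a₂ : ℝ)) / (a₃ : ℝ)) *
             |(t.2.2 : ℝ)| ^ ((a₂ : ℝ) / (a₃ : ℝ)) *
             ((a₃ : ℝ) / ((a₂ : ℝ) ^ ((a₂ : ℝ) / (a₃ : ℝ)) *
               ((a₃ : ℝ) - (a₂ : ℝ)) ^ (((a₃ : ℝ) - (a₂ : ℝ)) / (a₃ : ℝ))))) - 1 <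
          1 / Real.log ((a₃ : ℝ) * (H : ℝ))}.ncard : ℝ) ≤
      8 * (H : ℝ) ^ 3 * (1 / Real.log ((a₃ : ℝ) * (H : ℝ)) + 1 / (H : ℝ)) := by
  classical
  have h3 : 0 < a₃ := h₂.trans h₂₃
  have hH' : (1 : ℝ) ≤ (H : ℝ) := by exact_mod_cast hH
  have hHpos : (0 : ℝ) < (H : ℝ) := by linarith
  have hlog : 0 < Real.log ((a₃ : ℝ) * (H : ℝ)) := by
    apply Real.log_pos
    have : (3 : ℝ) ≤ (a₃ : ℝ) * (H : ℝ) := by exact_mod_cast hdH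
    linarith
  set ε : ℝ := 1 / Real.log ((a₃ : ℝ) * (H : ℝ)) with hεdef
  have hε : 0 < ε := by positivity
  -- positivity of icB
  have hBpos : ∀ c₁ c₃ : ℤ, c₁ ≠ 0 → c₃ ≠ 0 → 0 < icB a₂ a₃ c₁ c₃ := by
    intro c₁ c₃ hc₁ hc₃
    have h1 : (0 : ℝ) < |(c₁ : ℝ)| := abs_pos.2 (by exact_mod_cast hc₁)
    have h2 : (0 : ℝ) < |(c₃ : ℝ)| := abs_pos.2 (by exact_mod_cast hc₃)
    have ha2 : (0 : ℝ) < (a₂ : ℝ) := by exact_mod_cast h₂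
    have ha3 : (0 : ℝ) < (a₃ : ℝ) := by exact_mod_cast h3
    have ha32 : (0 : ℝ) < (a₃ : ℝ) - (a₂ : ℝ) := by
      have : (a₂ : ℝ) < (a₃ : ℝ) := by exact_mod_cast h₂₃
      linarith
    unfold icB
    exact mul_pos (mul_pos (Real.rpow_pos_of_pos h1 _) (Real.rpow_pos_of_pos h2 _))
      (div_pos ha3 (mul_pos (Real.rpow_pos_of_pos ha2 _) (Real.rpow_pos_of_pos ha32 _)))
  set T : Finset (ℤ × ℤ × ℤ) :=
    (Finset.Icc (-H) H ×ˢ Finset.Icc (-H) H ×ˢ Finset.Icc (-H) H).filter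
      (fun t => t.1 * t.2.1 * t.2.2 ≠ 0 ∧
        0 < |(t.2.1 : ℝ)| / icB a₂ a₃ t.1 t.2.2 - 1 ∧
        |(t.2.1 : ℝ)| / icB a₂ a₃ t.1 t.2.2 - 1 < ε) with hT
  have hset : {t : ℤ × ℤ × ℤ |
        t.1 ∈ Finset.Icc (-H) H ∧ t.2.1 ∈ Finset.Icc (-H) H ∧ t.2.2 ∈ Finset.Icc (-H) H ∧
        t.1 * t.2.1 * t.2.2 ≠ 0 ∧
        0 < |(t.2.1 : ℝ)| /
            (|(t.1 : ℝ)| ^ (((a₃ : ℝ) - (a₂ : ℝ)) / (a₃ : ℝ)) *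
             |(t.2.2 : ℝ)| ^ ((a₂ : ℝ) / (a₃ : ℝ)) *
             ((a₃ : ℝ) / ((a₂ : ℝ) ^ ((a₂ : ℝ) / (a₃ : ℝ)) *
               ((a₃ : ℝ) - (a₂ : ℝ)) ^ (((a₃ : ℝ) - (a₂ : ℝ)) / (a₃ : ℝ))))) - 1 ∧
        |(t.2.1 : ℝ)| /
            (|(t.1 : ℝ)| ^ (((a₃ : ℝ) - (a₂ : ℝ)) / (a₃ : ℝ)) *
             |(t.2.2 : ℝ)| ^ ((a₂ : ℝ) / (a₃ : ℝ)) *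
             ((a₃ : ℝ) / ((a₂ : ℝ) ^ ((a₂ : ℝ) / (a₃ : ℝ)) *
               ((a₃ : ℝ) - (a₂ : ℝ)) ^ (((a₃ : ℝ) - (a₂ : ℝ)) / (a₃ : ℝ))))) - 1 <
          1 / Real.log ((a₃ : ℝ) * (H : ℝ))} = ↑T := by
    ext t
    simp only [hT, Set.mem_setOf_eq, Finset.coe_filter, Finset.mem_product, icB, hεdef]
    tauto
  rw [hset, Set.ncard_coe_finset]
  set D : Finset ℤ := (Finset.Icc (-H) H).erase 0 with hD
  have hDcard : (D.card : ℝ) = 2 * (H : ℝ) := by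
    have h0 : (0 : ℤ) ∈ Finset.Icc (-H) H := by simp; omega
    rw [hD, Finset.card_erase_of_mem h0, Int.card_Icc]
    have he : (H + 1 - -H).toNat = (2 * H).toNat + 1 := by omega
    rw [he, Nat.add_sub_cancel]
    have h' : ((2 * H).toNat : ℤ) = 2 * H := Int.toNat_of_nonneg (by omega)
    have : ((2 * H).toNat : ℝ) = 2 * (H : ℝ) := by exact_mod_cast h'
    exact this
  have hsub : T ⊆ (D ×ˢ D).biUnion (fun pr =>
      ((Finset.Icc (-H) H).filter
        (fun c₂ : ℤ => icB a₂ a₃ pr.1 pr.2 < |(c₂ : ℝ)| ∧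
          |(c₂ : ℝ)| < icB a₂ a₃ pr.1 pr.2 * (1 + ε))).image
        (fun c₂ => (pr.1, c₂, pr.2))) := by
    rintro ⟨c₁, c₂, c₃⟩ ht
    simp only [hT, Finset.mem_filter, Finset.mem_product] at ht
    obtain ⟨⟨hm1, hm2, hm3⟩, hne, hpos, hlt⟩ := ht
    have hc₁ : c₁ ≠ 0 := by rintro rfl; simp at hne
    have hc₃ : c₃ ≠ 0 := by rintro rfl; simp at hne
    have hB := hBpos c₁ c₃ hc₁ hc₃
    have hlow : icB a₂ a₃ c₁ c₃ < |(c₂ : ℝ)| := (one_lt_div hB).1 (by linarith)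
    have hup : |(c₂ : ℝ)| < icB a₂ a₃ c₁ c₃ * (1 + ε) := by
      have := (div_lt_iff₀ hB).1 (show |(c₂ : ℝ)| / icB a₂ a₃ c₁ c₃ < 1 + ε by linarith)
      linarith [this]
    refine Finset.mem_biUnion.2 ⟨(c₁, c₃), ?_, ?_⟩
    · simp only [Finset.mem_product, hD, Finset.mem_erase]
      exact ⟨⟨hc₁, hm1⟩, ⟨hc₃, hm3⟩⟩
    · exact Finset.mem_image.2 ⟨c₂, Finset.mem_filter.2 ⟨hm2, hlow, hup⟩, rfl⟩
  have hcount : (T.card : ℝ) ≤ (4 * (H : ℝ) ^ 2) * (2 * ((H : ℝ) * ε + 1)) := by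
    have h1 : T.card ≤ ∑ pr ∈ D ×ˢ D,
        (((Finset.Icc (-H) H).filter
          (fun c₂ : ℤ => icB a₂ a₃ pr.1 pr.2 < |(c₂ : ℝ)| ∧
            |(c₂ : ℝ)| < icB a₂ a₃ pr.1 pr.2 * (1 + ε))).image
          (fun c₂ => (pr.1, c₂, pr.2))).card :=
      (Finset.card_le_card hsub).trans (Finset.card_biUnion_le)
    have h2 : (T.card : ℝ) ≤ ∑ pr ∈ D ×ˢ D, 2 * ((H : ℝ) * ε + 1) := by
      calc (T.card : ℝ) ≤ ∑ pr ∈ D ×ˢ D,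
          ((((Finset.Icc (-H) H).filter
            (fun c₂ : ℤ => icB a₂ a₃ pr.1 pr.2 < |(c₂ : ℝ)| ∧
              |(c₂ : ℝ)| < icB a₂ a₃ pr.1 pr.2 * (1 + ε))).image
            (fun c₂ => (pr.1, c₂, pr.2))).card : ℝ) := by exact_mod_cast h1
        _ ≤ ∑ pr ∈ D ×ˢ D, 2 * ((H : ℝ) * ε + 1) := by
            apply Finset.sum_le_sum
            intro pr hpr
            simp only [Finset.mem_product, hD, Finset.mem_erase] at hpr
            have hB := hBpos pr.1 pr.2 hpr.1.1 hpr.2.1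
            calc ((((Finset.Icc (-H) H).filter
                (fun c₂ : ℤ => icB a₂ a₃ pr.1 pr.2 < |(c₂ : ℝ)| ∧
                  |(c₂ : ℝ)| < icB a₂ a₃ pr.1 pr.2 * (1 + ε))).image
                (fun c₂ => (pr.1, c₂, pr.2))).card : ℝ)
                ≤ (((Finset.Icc (-H) H).filter
                    (fun c₂ : ℤ => icB a₂ a₃ pr.1 pr.2 < |(c₂ : ℝ)| ∧
                      |(c₂ : ℝ)| < icB a₂ a₃ pr.1 pr.2 * (1 + ε))).card : ℝ) := by
                  exact_mod_cast Finset.card_image_le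
              _ ≤ 2 * ((H : ℝ) * ε + 1) := fiber_bound H hH _ ε hB hε
    calc (T.card : ℝ) ≤ ∑ pr ∈ D ×ˢ D, 2 * ((H : ℝ) * ε + 1) := h2
      _ = ((D ×ˢ D).card : ℝ) * (2 * ((H : ℝ) * ε + 1)) := by
          rw [Finset.sum_const, nsmul_eq_mul]
      _ = (4 * (H : ℝ) ^ 2) * (2 * ((H : ℝ) * ε + 1)) := by
          rw [Finset.card_product]; push_cast [hDcard]; ring
  have hrhs : 8 * (H : ℝ) ^ 3 * (ε + 1 / (H : ℝ))
      = (4 * (H : ℝ) ^ 2) * (2 * ((H : ℝ) * ε + 1)) := by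
    field_simp
    ring
  rw [hrhs]
  exact hcount
end

section
/- Let f : ℝ → ℝ be real analytic at x₀ with f'(x₀) ≠ 0, and define γ(f, x₀) := sup_{k ≥ 2} |f^{(k)}(x₀)/(k! f'(x₀))|^{1/(k−1)}. Then 1/γ(f, x₀) is a lower bound for the radius of convergence of the Taylor series of f about x₀; in particular if f is a polynomial of degree ≥ 2 then γ(f, x₀) is finite and positive unless all derivatives of order ≥ 2 vanish at x₀. -/
/-! Taking the (k-1)-th power of `|f^{(k)}(x₀) / (k! f'(x₀))|^{1/(k-1)} ≤ γ` bounds the k-th Taylor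
coefficient by `|f'(x₀)| γ^{k-1}`, so for `|x - x₀| γ < 1` the Taylor series is dominated by a
convergent geometric series. If some `f^{(k)}(x₀)`, `k ≥ 2`, is nonzero, the corresponding element
of the set is positive, hence so is its least upper bound `γ`. -/

open Filter

lemma abs_le_mul_pow_of_rpow_le {a c γ : ℝ} {k : ℕ} (hc : c ≠ 0) (hk : 2 ≤ k)
    (h : |a / c| ^ (1 / ((k : ℝ) - 1)) ≤ γ) : |a| ≤ |c| * γ ^ (k - 1) := by
  have hk' : (0 : ℝ) < (k : ℝ) - 1 := by
    have : (2 : ℝ) ≤ k := by exact_mod_cast hk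
    linarith
  have hγ : 0 ≤ γ := (Real.rpow_nonneg (abs_nonneg _) _).trans h
  rw [one_div, Real.rpow_inv_le_iff_of_pos (abs_nonneg _) hγ hk'] at h
  have hpow : γ ^ ((k : ℝ) - 1) = γ ^ (k - 1) := by
    rw [← Real.rpow_natCast, Nat.cast_sub (by omega : 1 ≤ k), Nat.cast_one]
  calc |a| = |a / c| * |c| := by rw [← abs_mul, div_mul_cancel₀ a hc]
    _ ≤ γ ^ (k - 1) * |c| := by gcongr; rwa [← hpow]
    _ = |c| * γ ^ (k - 1) := mul_comm _ _

lemma summable_mul_pow_of_abs_le_mul_pow {a : ℕ → ℝ} {C γ t : ℝ} (hγ : 0 ≤ γ)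
    (ha : ∀ᶠ k in atTop, |a k| ≤ C * γ ^ (k - 1)) (ht : |t| * γ < 1) :
    Summable fun k => a k * t ^ k := by
  have hgeom : Summable fun k : ℕ => C * |t| * (|t| * γ) ^ (k - 1) := by
    refine Summable.mul_left _ ((summable_nat_add_iff 1).1 ?_)
    simpa using summable_geometric_of_lt_one (by positivity) ht
  refine hgeom.of_norm_bounded_eventually_nat ?_
  filter_upwards [ha, eventually_ge_atTop 1] with k hak hk
  obtain ⟨n, rfl⟩ : ∃ n, k = n + 1 := ⟨k - 1, by omega⟩
  calc ‖a (n + 1) * t ^ (n + 1)‖ = |a (n + 1)| * |t| ^ (n + 1) := by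
        rw [Real.norm_eq_abs, abs_mul, abs_pow]
    _ ≤ C * γ ^ n * |t| ^ (n + 1) := by gcongr; simpa using hak
    _ = C * |t| * (|t| * γ) ^ (n + 1 - 1) := by rw [Nat.add_sub_cancel, mul_pow]; ring

theorem gamma_bounds_radius_of_convergence_general (f : ℝ → ℝ) (x₀ : ℝ)
    (hf' : deriv f x₀ ≠ 0) (γ : ℝ)
    (hγ : IsLUB {y : ℝ | ∃ k : ℕ, 2 ≤ k ∧
        y = |iteratedDeriv k f x₀ / ((k.factorial : ℝ) * deriv f x₀)| ^
          ((1 : ℝ) / ((k : ℝ) - 1))} γ) :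
    (∀ x : ℝ, |x - x₀| * γ < 1 →
      Summable (fun k : ℕ =>
        iteratedDeriv k f x₀ / (k.factorial : ℝ) * (x - x₀) ^ k)) ∧
    ((∃ p : Polynomial ℝ, 2 ≤ p.natDegree ∧ f = fun x => p.eval x) →
      (∃ k : ℕ, 2 ≤ k ∧ iteratedDeriv k f x₀ ≠ 0) → 0 < γ) := by
  have hmem : ∀ k, 2 ≤ k → |iteratedDeriv k f x₀ / ((k.factorial : ℝ) * deriv f x₀)| ^
      ((1 : ℝ) / ((k : ℝ) - 1)) ≤ γ := fun k hk => hγ.1 ⟨k, hk, rfl⟩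
  have hγ0 : 0 ≤ γ := (Real.rpow_nonneg (abs_nonneg _) _).trans (hmem 2 le_rfl)
  refine ⟨fun x hx => ?_, fun _ ⟨k, hk, hk0⟩ => ?_⟩
  · have hcoeff : ∀ᶠ k in atTop, |iteratedDeriv k f x₀ / (k.factorial : ℝ)| ≤
        |deriv f x₀| * γ ^ (k - 1) := by
      filter_upwards [eventually_ge_atTop 2] with k hk
      exact abs_le_mul_pow_of_rpow_le hf' hk (by rw [div_div]; exact hmem k hk)
    exact summable_mul_pow_of_abs_le_mul_pow hγ0 hcoeff hx
  · have hne : (k.factorial : ℝ) * deriv f x₀ ≠ 0 :=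
      mul_ne_zero (Nat.cast_ne_zero.2 k.factorial_ne_zero) hf'
    exact (Real.rpow_pos_of_pos (abs_pos.2 (div_ne_zero hk0 hne)) _).trans_le (hmem k hk)

theorem gamma_bounds_radius_of_convergence (f : ℝ → ℝ) (x₀ : ℝ)
    (hf : AnalyticAt ℝ f x₀) (hf' : deriv f x₀ ≠ 0) (γ : ℝ)
    (hγ : IsLUB {y : ℝ | ∃ k : ℕ, 2 ≤ k ∧
        y = |iteratedDeriv k f x₀ / ((k.factorial : ℝ) * deriv f x₀)| ^
          ((1 : ℝ) / ((k : ℝ) - 1))} γ) :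
    (∀ x : ℝ, |x - x₀| * γ < 1 →
      Summable (fun k : ℕ =>
        iteratedDeriv k f x₀ / (k.factorial : ℝ) * (x - x₀) ^ k)) ∧
    ((∃ p : Polynomial ℝ, 2 ≤ p.natDegree ∧ f = fun x => p.eval x) →
      (∃ k : ℕ, 2 ≤ k ∧ iteratedDeriv k f x₀ ≠ 0) → 0 < γ) :=
  gamma_bounds_radius_of_convergence_general f x₀ hf' γ hγ
end

section
/- Let f(x) = c₁ + c₂x^{a₂} + c₃x^{a₃} with real coefficients, 0 < a₂ < a₃, c₃ > 0 > c₂, c₁ > 0, and suppose the discriminant condition Δ(f) := a₂^{a₂}(a₃−a₂)^{a₃−a₂}(−c₂)^{a₃} − a₃^{a₃} c₁^{a₃−a₂} c₃^{a₂} equals 0 and gcd(a₂, a₃) = 1. Then ζ := (−a₂c₂/(a₃c₃))^{1/(a₃−a₂)} is a positive root of f with f(ζ) = f'(ζ) = 0, and f has no other positive real root. -/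
/-!
With `d = a₃ - a₂`, the derivative factors as `f'(x) = x^(a₂-1) · a₃c₃ · (x^d - ζ^d)`, so on
`(0, ∞)` the trinomial decreases up to its only critical point `ζ` and increases after it; hence
`ζ` is the only positive solution of `f(x) = f(ζ)`. At the critical point,
`a₃ f(ζ) = a₃c₁ - d(-c₂)ζ^a₂`, and raising both terms to the `d`-th power turns their equality
into `Δ(f) = 0`, since `ζ^d = -a₂c₂/(a₃c₃)`.
-/

open Set

def trinomial (c₁ c₂ c₃ : ℝ) (m n : ℕ) (x : ℝ) : ℝ :=
  c₁ + c₂ * x ^ m + c₃ * x ^ n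

def trinomialDiscr (c₁ c₂ c₃ : ℝ) (m n : ℕ) : ℝ :=
  (m : ℝ) ^ m * ((n : ℝ) - m) ^ (n - m) * (-c₂) ^ n - (n : ℝ) ^ n * c₁ ^ (n - m) * c₃ ^ m

theorem eq_of_apply_eq_of_deriv_neg_of_deriv_pos {f : ℝ → ℝ} {a ζ x : ℝ} (hf : Continuous f)
    (hneg : ∀ y ∈ Ioo a ζ, deriv f y < 0) (hpos : ∀ y ∈ Ioi ζ, 0 < deriv f y)
    (hax : a ≤ x) (hfx : f x = f ζ) : x = ζ := by
  rcases lt_trichotomy x ζ with hlt | heq | hgt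
  · have hanti : StrictAntiOn f (Icc a ζ) :=
      strictAntiOn_of_deriv_neg (convex_Icc a ζ) hf.continuousOn
        (by rwa [interior_Icc])
    exact absurd hfx (hanti ⟨hax, hlt.le⟩ ⟨hax.trans hlt.le, le_rfl⟩ hlt).ne'
  · exact heq
  · have hmono : StrictMonoOn f (Ici ζ) :=
      strictMonoOn_of_deriv_pos (convex_Ici ζ) hf.continuousOn
        (by rwa [interior_Ici])
    exact absurd hfx (hmono self_mem_Ici hgt.le hgt).ne'

namespace trinomial

variable {c₁ c₂ c₃ : ℝ} {m n : ℕ}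

theorem continuous : Continuous (trinomial c₁ c₂ c₃ m n) := by
  unfold trinomial
  fun_prop

theorem hasDerivAt (hm : 0 < m) (hmn : m ≤ n) (x : ℝ) :
    HasDerivAt (trinomial c₁ c₂ c₃ m n)
      (x ^ (m - 1) * (m * c₂ + n * c₃ * x ^ (n - m))) x := by
  have hpow : x ^ (n - 1) = x ^ (m - 1) * x ^ (n - m) := by
    rw [← pow_add]
    congr 1
    omega
  exact ((((hasDerivAt_pow m x).const_mul c₂).const_add c₁).add
    ((hasDerivAt_pow n x).const_mul c₃)).congr_deriv (by rw [hpow]; ring)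

theorem hasDerivAt_of_critical {ζ : ℝ} (hm : 0 < m) (hmn : m ≤ n)
    (hζ : n * c₃ * ζ ^ (n - m) = -m * c₂) (x : ℝ) :
    HasDerivAt (trinomial c₁ c₂ c₃ m n)
      (x ^ (m - 1) * (n * c₃ * (x ^ (n - m) - ζ ^ (n - m)))) x := by
  convert hasDerivAt hm hmn x using 2
  linear_combination -hζ

theorem mul_apply_of_critical {ζ : ℝ} (hmn : m ≤ n) (hζ : n * c₃ * ζ ^ (n - m) = -m * c₂) :
    n * trinomial c₁ c₂ c₃ m n ζ = n * c₁ - ((n : ℝ) - m) * (-c₂) * ζ ^ m := by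
  have hpow : ζ ^ n = ζ ^ m * ζ ^ (n - m) := by rw [← pow_add, Nat.add_sub_cancel' hmn]
  rw [trinomial, hpow]
  linear_combination ζ ^ m * hζ

theorem apply_eq_zero_of_critical {ζ : ℝ} (hmn : m < n) (hc₁ : 0 ≤ c₁) (hc₂ : c₂ ≤ 0)
    (hc₃ : c₃ ≠ 0) (hζ₀ : 0 ≤ ζ) (hζ : n * c₃ * ζ ^ (n - m) = -m * c₂)
    (hΔ : trinomialDiscr c₁ c₂ c₃ m n = 0) :
    trinomial c₁ c₂ c₃ m n ζ = 0 := by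
  set d := n - m with hd
  have hd₀ : d ≠ 0 := by omega
  have hn : (0 : ℝ) < n := by exact_mod_cast (Nat.zero_le m).trans_lt hmn
  have hdR : ((n : ℝ) - m) = d := by rw [hd, Nat.cast_sub hmn.le]
  have hpow : (n * c₁) ^ d = (d * (-c₂) * ζ ^ m) ^ d := by
    have hmd : m + d = n := by omega
    apply mul_right_cancel₀ (pow_ne_zero m (mul_ne_zero hn.ne' hc₃))
    calc (n * c₁) ^ d * (n * c₃) ^ m = (n : ℝ) ^ n * c₁ ^ d * c₃ ^ m := by
          rw [← hmd]; ring
      _ = m ^ m * d ^ d * (-c₂) ^ n := by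
          rw [trinomialDiscr, hdR] at hΔ; linarith
      _ = (d * (-c₂)) ^ d * (n * c₃ * ζ ^ d) ^ m := by
          rw [hζ, ← hmd]; ring
      _ = (d * (-c₂) * ζ ^ m) ^ d * (n * c₃) ^ m := by ring
  have hroot : n * c₁ = d * (-c₂) * ζ ^ m :=
    (pow_left_inj₀ (by positivity) (by have := neg_nonneg.2 hc₂; positivity) hd₀).1 hpow
  have hf := mul_apply_of_critical (c₁ := c₁) hmn.le hζ
  rw [hdR, ← hroot, sub_self] at hf
  exact (mul_eq_zero.1 hf).resolve_left hn.ne'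

theorem eq_of_apply_eq_of_critical {ζ x : ℝ} (hm : 0 < m) (hmn : m < n) (hc₃ : 0 < c₃)
    (hζ₀ : 0 < ζ) (hζ : n * c₃ * ζ ^ (n - m) = -m * c₂) (hx : 0 < x)
    (hfx : trinomial c₁ c₂ c₃ m n x = trinomial c₁ c₂ c₃ m n ζ) : x = ζ := by
  have hd₀ : n - m ≠ 0 := by omega
  have hnc₃ : (0 : ℝ) < n * c₃ := mul_pos (by exact_mod_cast hm.trans hmn) hc₃
  have hderiv (y : ℝ) := (hasDerivAt_of_critical (c₁ := c₁) hm hmn.le hζ y).deriv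
  refine eq_of_apply_eq_of_deriv_neg_of_deriv_pos continuous (fun y hy ↦ ?_) (fun y hy ↦ ?_)
    hx.le hfx
  · rw [hderiv]
    have hpow := pow_lt_pow_left₀ hy.2 hy.1.le hd₀
    exact mul_neg_of_pos_of_neg (pow_pos hy.1 _) (mul_neg_of_pos_of_neg hnc₃ (by linarith))
  · rw [hderiv]
    have hy : ζ < y := hy
    have hpow := pow_lt_pow_left₀ hy hζ₀.le hd₀
    exact mul_pos (pow_pos (hζ₀.trans hy) _) (mul_pos hnc₃ (by linarith))

end trinomial

open trinomial in
theorem degenerate_trinomial_root_general (c₁ c₂ c₃ : ℝ) (a₂ a₃ : ℕ)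
    (h₂ : 0 < a₂) (h₂₃ : a₂ < a₃)
    (hc₁ : 0 < c₁) (hc₂ : c₂ < 0) (hc₃ : 0 < c₃)
    (hΔ : (a₂ : ℝ) ^ a₂ * ((a₃ : ℝ) - (a₂ : ℝ)) ^ (a₃ - a₂) * (-c₂) ^ a₃ -
      (a₃ : ℝ) ^ a₃ * c₁ ^ (a₃ - a₂) * c₃ ^ a₂ = 0) :
    0 < (-(a₂ : ℝ) * c₂ / ((a₃ : ℝ) * c₃)) ^ ((1 : ℝ) / ((a₃ : ℝ) - (a₂ : ℝ))) ∧
    (let ζ := (-(a₂ : ℝ) * c₂ / ((a₃ : ℝ) * c₃)) ^ ((1 : ℝ) / ((a₃ : ℝ) - (a₂ : ℝ)));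
      c₁ + c₂ * ζ ^ a₂ + c₃ * ζ ^ a₃ = 0 ∧
      deriv (fun x : ℝ => c₁ + c₂ * x ^ a₂ + c₃ * x ^ a₃) ζ = 0 ∧
      ∀ x : ℝ, 0 < x → c₁ + c₂ * x ^ a₂ + c₃ * x ^ a₃ = 0 → x = ζ) := by
  have ha₃ : (0 : ℝ) < a₃ := by exact_mod_cast h₂.trans h₂₃
  set r := -(a₂ : ℝ) * c₂ / ((a₃ : ℝ) * c₃) with hr
  have hr₀ : 0 < r :=
    div_pos (mul_pos_of_neg_of_neg (by simpa using h₂) hc₂) (mul_pos ha₃ hc₃)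
  set ζ := r ^ ((1 : ℝ) / ((a₃ : ℝ) - (a₂ : ℝ))) with hζdef
  have hζ₀ : 0 < ζ := Real.rpow_pos_of_pos hr₀ _
  have hζd : ζ ^ (a₃ - a₂) = r := by
    rw [hζdef, one_div, ← Nat.cast_sub h₂₃.le]
    exact Real.rpow_inv_natCast_pow hr₀.le (by omega)
  have hζ : (a₃ : ℝ) * c₃ * ζ ^ (a₃ - a₂) = -a₂ * c₂ := by
    rw [hζd, hr]
    field_simp
  have hroot : trinomial c₁ c₂ c₃ a₂ a₃ ζ = 0 :=
    apply_eq_zero_of_critical h₂₃ hc₁.le hc₂.le hc₃.ne' hζ₀.le hζ hΔ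
  refine ⟨hζ₀, hroot, ?_, fun x hx hfx ↦ ?_⟩
  · exact (hasDerivAt_of_critical h₂ h₂₃.le hζ ζ).deriv.trans
      (by rw [sub_self, mul_zero, mul_zero])
  · exact eq_of_apply_eq_of_critical h₂ h₂₃ hc₃ hζ₀ hζ hx (hfx.trans hroot.symm)

theorem degenerate_trinomial_root (c₁ c₂ c₃ : ℝ) (a₂ a₃ : ℕ)
    (h₂ : 0 < a₂) (h₂₃ : a₂ < a₃) (hgcd : Nat.gcd a₂ a₃ = 1)
    (hc₁ : 0 < c₁) (hc₂ : c₂ < 0) (hc₃ : 0 < c₃)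
    (hΔ : (a₂ : ℝ) ^ a₂ * ((a₃ : ℝ) - (a₂ : ℝ)) ^ (a₃ - a₂) * (-c₂) ^ a₃ -
      (a₃ : ℝ) ^ a₃ * c₁ ^ (a₃ - a₂) * c₃ ^ a₂ = 0) :
    0 < (-(a₂ : ℝ) * c₂ / ((a₃ : ℝ) * c₃)) ^ ((1 : ℝ) / ((a₃ : ℝ) - (a₂ : ℝ))) ∧
    (let ζ := (-(a₂ : ℝ) * c₂ / ((a₃ : ℝ) * c₃)) ^ ((1 : ℝ) / ((a₃ : ℝ) - (a₂ : ℝ)));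
      c₁ + c₂ * ζ ^ a₂ + c₃ * ζ ^ a₃ = 0 ∧
      deriv (fun x : ℝ => c₁ + c₂ * x ^ a₂ + c₃ * x ^ a₃) ζ = 0 ∧
      ∀ x : ℝ, 0 < x → c₁ + c₂ * x ^ a₂ + c₃ * x ^ a₃ = 0 → x = ζ) :=
  degenerate_trinomial_root_general c₁ c₂ c₃ a₂ a₃ h₂ h₂₃ hc₁ hc₂ hc₃ hΔ
end
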